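/- For every β > 0, the ratio K̃(2n)/K(n) converges, as n → ∞, to K(β) := (β+2)(β²+6β+12)·(7β²+9β+3+√(37β⁴+78β³+51β²+18β+9))² / ( 4(β+1)(β²+3β+3)·(4β²+9β+3+√(13β⁴+48β³+33β²−18β+9))² ), where K(n) is the condition number of the Fisher information matrix for the design ξ_n = {0, 1/n, …, 1} on [0,1] (n+1 points, step 1/n) and K̃(2n) is the condition number for the design ξ̃_{2n} = {0, 1/n, …, 2} on [0,2] (2n+1 points, step 1/n). -/

import Mathlib

open Real Filter

/-- Entry `L1` of the Fisher information matrix for an equidistant design with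
`n` points and step size `d`, covariance parameter `β`. -/
noncomputable def L1 (β : ℝ) (n : ℕ) (d : ℝ) : ℝ :=
  (2 - (n : ℝ) + n * exp (β * d)) / (exp (β * d) + 1)

/-- Entry `L2` of the Fisher information matrix. -/
noncomputable def L2 (β : ℝ) (n : ℕ) (d : ℝ) : ℝ :=
  d * ((n : ℝ) - 1) / 2 * L1 β n d

/-- Entry `L3` of the Fisher information matrix. -/
noncomputable def L3 (β : ℝ) (n : ℕ) (d : ℝ) : ℝ :=
  d ^ 2 * ((n : ℝ) - 1) / (exp (2 * β * d) - 1) *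
    ((n : ℝ) * (2 * n - 1) * (exp (β * d) - 1) ^ 2 / 6 + n * (exp (β * d) - 1) + 1)
/-- The quantity `R = (L1+L3)²/(L1·L3 − L2²)` for `n` points with step `d`. -/
noncomputable def Rquot (β : ℝ) (n : ℕ) (d : ℝ) : ℝ :=
  (L1 β n d + L3 β n d) ^ 2 / (L1 β n d * L3 β n d - L2 β n d ^ 2)

/-- The condition number of the 2×2 Fisher information matrix for `n` points
with step `d`: `(√R + √(R−4))²/4`. -/
noncomputable def Kcond (β : ℝ) (n : ℕ) (d : ℝ) : ℝ :=
  (Real.sqrt (Rquot β n d) + Real.sqrt (Rquot β n d - 4)) ^ 2 / 4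

/-- Condition number for the design `ξ_n = {0, 1/n, …, 1}` on `[0,1]`. -/
noncomputable def Kn (β : ℝ) (n : ℕ) : ℝ := Kcond β (n + 1) (1 / n)

/-- Condition number for the design `ξ̃_{2n} = {0, 1/n, …, 2}` on `[0,2]`. -/
noncomputable def Ktilde (β : ℝ) (n : ℕ) : ℝ := Kcond β (2 * n + 1) (1 / n)

/-! With `c * k + 1` design points at step `1 / k`, the slope `k * (exp (β / k) - 1)` tends to
`β`, so each entry of the Fisher information matrix converges, to
`L1 → (2 + cβ)/2`, `L2 → c(2 + cβ)/4` and `L3 → c(c²β² + 3cβ + 3)/(6β)`.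
The condition number is continuous at every nonsingular matrix, so `K(n)` (`c = 1`) and
`K̃(2n)` (`c = 2`) converge to the condition numbers of these limit matrices. Since the
condition number is invariant under scaling, it can be computed on polynomial multiples of them,
and the closed form comes out from `λ₊ / λ₋ = λ₊² / det`. -/

open Topology

noncomputable def condNumber (p q r : ℝ) : ℝ :=
  (√((p + r) ^ 2 / (p * r - q ^ 2)) + √((p + r) ^ 2 / (p * r - q ^ 2) - 4)) ^ 2 / 4

theorem Kcond_eq_condNumber (β : ℝ) (n : ℕ) (d : ℝ) :
    Kcond β n d = condNumber (L1 β n d) (L2 β n d) (L3 β n d) := rfl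

theorem condNumber_mul_left {t : ℝ} (ht : t ≠ 0) (p q r : ℝ) :
    condNumber (t * p) (t * q) (t * r) = condNumber p q r := by
  have hR : (t * p + t * r) ^ 2 / (t * p * (t * r) - (t * q) ^ 2)
      = (p + r) ^ 2 / (p * r - q ^ 2) := by
    rw [show t * p + t * r = t * (p + r) by ring,
      show t * p * (t * r) - (t * q) ^ 2 = t ^ 2 * (p * r - q ^ 2) by ring,
      mul_pow, mul_div_mul_left _ _ (pow_ne_zero 2 ht)]
  rw [condNumber, condNumber, hR]

/-- The right-hand side is `λ₊ / λ₋ = λ₊ ^ 2 / det` for the eigenvalues `λ₊ ≥ λ₋ > 0` of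
`!![p, q; q, r]`, with `λ₊ = (p + r + √((p - r) ^ 2 + 4 * q ^ 2)) / 2`. -/
theorem condNumber_eq {p q r : ℝ} (hpr : 0 ≤ p + r) (hdet : 0 < p * r - q ^ 2) :
    condNumber p q r = (p + r + √((p - r) ^ 2 + 4 * q ^ 2)) ^ 2 / (4 * (p * r - q ^ 2)) := by
  have hsub : (p + r) ^ 2 / (p * r - q ^ 2) - 4 = ((p - r) ^ 2 + 4 * q ^ 2) / (p * r - q ^ 2) := by
    field_simp
    ring
  rw [condNumber, hsub, Real.sqrt_div' _ hdet.le, Real.sqrt_div' _ hdet.le, Real.sqrt_sq hpr,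
    ← add_div, div_pow, Real.sq_sqrt hdet.le, div_div, mul_comm (p * r - q ^ 2)]

theorem Filter.Tendsto.condNumber {α : Type*} {l : Filter α} {f g h : α → ℝ} {p q r : ℝ}
    (hf : Tendsto f l (𝓝 p)) (hg : Tendsto g l (𝓝 q)) (hh : Tendsto h l (𝓝 r))
    (hdet : p * r - q ^ 2 ≠ 0) :
    Tendsto (fun x => _root_.condNumber (f x) (g x) (h x)) l (𝓝 (_root_.condNumber p q r)) := by
  have hR := ((hf.add hh).pow 2).div ((hf.mul hh).sub (hg.pow 2)) hdet
  exact ((hR.sqrt.add (hR.sub_const 4).sqrt).pow 2).div_const 4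

section Design

variable (β : ℝ) (c : ℕ)

noncomputable def expDiffQuot (k : ℕ) : ℝ := k * (exp (β * (1 / k)) - 1)

theorem tendsto_expDiffQuot : Tendsto (expDiffQuot β) atTop (𝓝 β) := by
  have hderiv : HasDerivAt (fun x => exp (β * x)) β 0 := by
    simpa using ((hasDerivAt_id (0 : ℝ)).const_mul β).exp
  have hinv : Tendsto (fun k : ℕ => (k : ℝ)⁻¹) atTop (𝓝[>] 0) :=
    tendsto_inv_atTop_nhdsGT_zero.comp tendsto_natCast_atTop_atTop
  refine (hderiv.tendsto_slope_zero_right.comp hinv).congr fun k => ?_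
  simp [expDiffQuot]

theorem tendsto_exp_mul_one_div_nat : Tendsto (fun k : ℕ => exp (β * (1 / k))) atTop (𝓝 1) := by
  have h := (continuous_exp.tendsto _).comp (tendsto_one_div_atTop_nhds_zero_nat.const_mul β)
  rwa [mul_zero, exp_zero] at h

theorem tendsto_design_mul_exp_sub_one :
    Tendsto (fun k : ℕ => ((c * k + 1 : ℕ) : ℝ) * (exp (β * (1 / k)) - 1)) atTop (𝓝 (c * β)) := by
  have h := ((tendsto_expDiffQuot β).const_mul (c : ℝ)).add
    ((tendsto_exp_mul_one_div_nat β).sub_const 1)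
  rw [sub_self, add_zero] at h
  refine h.congr fun k => ?_
  simp only [expDiffQuot]
  push_cast
  ring

theorem tendsto_L1_design :
    Tendsto (fun k : ℕ => L1 β (c * k + 1) (1 / k)) atTop (𝓝 ((2 + c * β) / 2)) := by
  have h := ((tendsto_design_mul_exp_sub_one β c).const_add 2).div
    ((tendsto_exp_mul_one_div_nat β).add_const 1) (by norm_num)
  rw [one_add_one_eq_two] at h
  refine h.congr fun k => ?_
  rw [Pi.div_apply, L1]
  ring

theorem tendsto_L2_design :
    Tendsto (fun k : ℕ => L2 β (c * k + 1) (1 / k)) atTop (𝓝 (c / 2 * ((2 + c * β) / 2))) := by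
  refine ((tendsto_L1_design β c).const_mul (c / 2 : ℝ)).congr' ?_
  filter_upwards [eventually_ne_atTop 0] with k hk
  rw [L2]
  push_cast
  field_simp
  ring

theorem tendsto_L3_design (hβ : β ≠ 0) :
    Tendsto (fun k : ℕ => L3 β (c * k + 1) (1 / k)) atTop
      (𝓝 (c * (c ^ 2 * β ^ 2 + 3 * c * β + 3) / (6 * β))) := by
  -- With `e = exp (β / k)` and `w = (c * k + 1) * (e - 1)`, the bracket of `L3` is
  -- `w * (2 * w - (e - 1)) / 6 + w + 1` and its prefactor is `c / (expDiffQuot β k * (e + 1))`.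
  have hw := tendsto_design_mul_exp_sub_one β c
  have he := tendsto_exp_mul_one_div_nat β
  have h := ((((hw.mul ((hw.const_mul 2).sub (he.sub_const 1))).div_const 6).add hw).add_const 1
    |>.const_mul (c : ℝ)).div ((tendsto_expDiffQuot β).mul (he.add_const 1)) (by simpa using hβ)
  have hlim : (c * (c * β * (2 * (c * β) - (1 - 1)) / 6 + c * β + 1) / (β * (1 + 1)) : ℝ)
      = c * (c ^ 2 * β ^ 2 + 3 * c * β + 3) / (6 * β) := by
    field_simp
    ring
  rw [hlim] at h
  refine h.congr' ?_
  filter_upwards [eventually_ne_atTop 0] with k hk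
  have he1 : exp (β * (1 / k)) - 1 ≠ 0 := by
    rw [sub_ne_zero, Ne, exp_eq_one_iff]
    positivity
  have he2 : exp (2 * β * (1 / k)) - 1 = (exp (β * (1 / k)) - 1) * (exp (β * (1 / k)) + 1) := by
    rw [show 2 * β * (1 / k) = β * (1 / k) + β * (1 / k) by ring, exp_add]
    ring
  rw [Pi.div_apply, L3, he2, expDiffQuot]
  push_cast
  field_simp
  ring

end Design

theorem tendsto_Kcond_design {β : ℝ} (hβ : 0 < β) {c : ℕ} (hc : c ≠ 0) :
    Tendsto (fun k : ℕ => Kcond β (c * k + 1) (1 / k)) atTop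
      (𝓝 (condNumber ((2 + c * β) / 2) (c / 2 * ((2 + c * β) / 2))
        (c * (c ^ 2 * β ^ 2 + 3 * c * β + 3) / (6 * β)))) := by
  have hdet : (2 + c * β) / 2 * (c * (c ^ 2 * β ^ 2 + 3 * c * β + 3) / (6 * β))
      - (c / 2 * ((2 + c * β) / 2)) ^ 2
      = c * (2 + c * β) * (c ^ 2 * β ^ 2 + 6 * c * β + 12) / (48 * β) := by
    field_simp
    ring
  simp_rw [Kcond_eq_condNumber]
  exact (tendsto_L1_design β c).condNumber (tendsto_L2_design β c)
    (tendsto_L3_design β c hβ.ne') (by rw [hdet]; positivity)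

theorem condNumber_design_one {β : ℝ} (hβ : 0 < β) :
    condNumber ((2 + β) / 2) ((2 + β) / 4) ((β ^ 2 + 3 * β + 3) / (6 * β))
      = (4 * β ^ 2 + 9 * β + 3 + √(13 * β ^ 4 + 48 * β ^ 3 + 33 * β ^ 2 - 18 * β + 9)) ^ 2
        / (3 * β * (β + 2) * (β ^ 2 + 6 * β + 12)) := by
  have hscale : condNumber ((2 + β) / 2) ((2 + β) / 4) ((β ^ 2 + 3 * β + 3) / (6 * β))
      = condNumber (3 * β * (β + 2)) (3 * β * (β + 2) / 2) (β ^ 2 + 3 * β + 3) := by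
    rw [← condNumber_mul_left (t := 6 * β) (by positivity)]
    congr 1 <;> field_simp <;> ring
  have hdet : 3 * β * (β + 2) * (β ^ 2 + 3 * β + 3) - (3 * β * (β + 2) / 2) ^ 2
      = 3 * β * (β + 2) * (β ^ 2 + 6 * β + 12) / 4 := by ring
  have hdisc : (3 * β * (β + 2) - (β ^ 2 + 3 * β + 3)) ^ 2 + 4 * (3 * β * (β + 2) / 2) ^ 2
      = 13 * β ^ 4 + 48 * β ^ 3 + 33 * β ^ 2 - 18 * β + 9 := by ring
  rw [hscale, condNumber_eq (by positivity) (by rw [hdet]; positivity), hdisc, hdet]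
  field_simp
  ring

theorem condNumber_design_two {β : ℝ} (hβ : 0 < β) :
    condNumber (β + 1) (β + 1) ((4 * β ^ 2 + 6 * β + 3) / (3 * β))
      = (7 * β ^ 2 + 9 * β + 3 + √(37 * β ^ 4 + 78 * β ^ 3 + 51 * β ^ 2 + 18 * β + 9)) ^ 2
        / (12 * β * (β + 1) * (β ^ 2 + 3 * β + 3)) := by
  have hscale : condNumber (β + 1) (β + 1) ((4 * β ^ 2 + 6 * β + 3) / (3 * β))
      = condNumber (3 * β * (β + 1)) (3 * β * (β + 1)) (4 * β ^ 2 + 6 * β + 3) := by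
    rw [← condNumber_mul_left (t := 3 * β) (by positivity)]
    congr 1
    field_simp
  have hdet : 3 * β * (β + 1) * (4 * β ^ 2 + 6 * β + 3) - (3 * β * (β + 1)) ^ 2
      = 3 * β * (β + 1) * (β ^ 2 + 3 * β + 3) := by ring
  have hdisc : (3 * β * (β + 1) - (4 * β ^ 2 + 6 * β + 3)) ^ 2 + 4 * (3 * β * (β + 1)) ^ 2
      = 37 * β ^ 4 + 78 * β ^ 3 + 51 * β ^ 2 + 18 * β + 9 := by ring
  rw [hscale, condNumber_eq (by positivity) (by rw [hdet]; positivity), hdisc, hdet]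
  ring

/-- Doubling the design interval: `K̃(2n)/K(n) → K(β)` with the explicit
formula for `K(β)`. -/
theorem K_interval_double_ratio (β : ℝ) (hβ : 0 < β) :
    Tendsto (fun n : ℕ => Ktilde β n / Kn β n) atTop
      (nhds ((β + 2) * (β ^ 2 + 6 * β + 12) *
          (7 * β ^ 2 + 9 * β + 3 +
            Real.sqrt (37 * β ^ 4 + 78 * β ^ 3 + 51 * β ^ 2 + 18 * β + 9)) ^ 2 /
        (4 * (β + 1) * (β ^ 2 + 3 * β + 3) *
          (4 * β ^ 2 + 9 * β + 3 +
            Real.sqrt (13 * β ^ 4 + 48 * β ^ 3 + 33 * β ^ 2 - 18 * β + 9)) ^ 2))) := by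
  have hK : Tendsto (Kn β) atTop (𝓝 (condNumber ((2 + β) / 2) ((2 + β) / 4)
      ((β ^ 2 + 3 * β + 3) / (6 * β)))) := by
    convert tendsto_Kcond_design hβ one_ne_zero using 3 <;> norm_num [Kn]
    ring
  have hK' : Tendsto (Ktilde β) atTop (𝓝 (condNumber (β + 1) (β + 1)
      ((4 * β ^ 2 + 6 * β + 3) / (3 * β)))) := by
    convert tendsto_Kcond_design hβ two_ne_zero using 3 <;> norm_num [Ktilde] <;> field_simp <;> ring
  rw [condNumber_design_one hβ] at hK
  rw [condNumber_design_two hβ] at hK'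
  convert hK'.div hK (by positivity) using 2
  · rfl
  field_simp
  ring
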